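/- For every finite K ⊆ ℕ and every K-symmetric relation ρ ⊆ I × I, there exist a finite set K' ⊆ ℕ and a K'-symmetric relation σ ⊆ I × I such that for every ξ ∈ I: if there exists η ∈ I with (ξ, η) ∈ ρ, then there exists exactly one η ∈ I with (ξ, η) ∈ ρ and (ξ, η) ∈ σ. (This is the combinatorial core of the fact that the Zermelo-Asser axiom AC^{1,1} holds in the permutation model Σ₃.) -/
import Mathlib


/-- Membership in the group `𝔊` underlying the permutation model `Σ₃`: permutations of
`I = Fin 2 × ℕ` fixing every point of `{1} × ℕ`. -/
def InG3 (π : Equiv.Perm (Fin 2 × ℕ)) : Prop :=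
  ∀ n : ℕ, π (1, n) = (1, n)

/-- `ρ ⊆ I × I` is `K`-symmetric (for `K ⊆ ℕ`): for every `π ∈ 𝔊` fixing every point of
`{0} × K`, `(π ξ, π η) ∈ ρ ↔ (ξ, η) ∈ ρ`. -/
def SymmRel3 (K : Set ℕ) (ρ : Set ((Fin 2 × ℕ) × (Fin 2 × ℕ))) : Prop :=
  ∀ π : Equiv.Perm (Fin 2 × ℕ), InG3 π → (∀ k ∈ K, π (0, k) = (0, k)) →
    ∀ ξ η : Fin 2 × ℕ, ((π ξ, π η) ∈ ρ ↔ (ξ, η) ∈ ρ)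

open Classical in
/-- Canonical equivariant choice function used to build the choice relation. -/
noncomputable def choice3 (K : Set ℕ) (ρ : Set ((Fin 2 × ℕ) × (Fin 2 × ℕ))) (k₀ k₁ : ℕ)
    (ξ : Fin 2 × ℕ) : Fin 2 × ℕ :=
  if ∃ m, (ξ, ((1 : Fin 2), m)) ∈ ρ then ((1 : Fin 2), sInf {m | (ξ, ((1 : Fin 2), m)) ∈ ρ})
  else if (ξ, ξ) ∈ ρ then ξ
  else if ∃ k, k ∈ K ∧ (ξ, ((0 : Fin 2), k)) ∈ ρ then
    ((0 : Fin 2), sInf {k | k ∈ K ∧ (ξ, ((0 : Fin 2), k)) ∈ ρ})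
  else if ξ = ((0 : Fin 2), k₀) then ((0 : Fin 2), k₁) else ((0 : Fin 2), k₀)

lemma choice3_equivariant (K : Set ℕ) (ρ : Set ((Fin 2 × ℕ) × (Fin 2 × ℕ))) (k₀ k₁ : ℕ)
    (hρ : SymmRel3 K ρ) (π : Equiv.Perm (Fin 2 × ℕ)) (hπ : InG3 π)
    (hfixK : ∀ k ∈ K, π (0, k) = (0, k)) (h0 : π (0, k₀) = (0, k₀)) (h1 : π (0, k₁) = (0, k₁))
    (ξ : Fin 2 × ℕ) : choice3 K ρ k₀ k₁ (π ξ) = π (choice3 K ρ k₀ k₁ ξ) := by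
  classical
  have hA : ∀ m, ((π ξ, ((1 : Fin 2), m)) ∈ ρ ↔ (ξ, ((1 : Fin 2), m)) ∈ ρ) := by
    intro m
    have := hρ π hπ hfixK ξ (1, m)
    rwa [hπ m] at this
  have hKmem : ∀ k ∈ K, ((π ξ, ((0 : Fin 2), k)) ∈ ρ ↔ (ξ, ((0 : Fin 2), k)) ∈ ρ) := by
    intro k hk
    have := hρ π hπ hfixK ξ (0, k)
    rwa [hfixK k hk] at this
  have e1 : {m | (π ξ, ((1 : Fin 2), m)) ∈ ρ} = {m | (ξ, ((1 : Fin 2), m)) ∈ ρ} :=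
    Set.ext fun m => hA m
  have e2 : {k | k ∈ K ∧ (π ξ, ((0 : Fin 2), k)) ∈ ρ} =
      {k | k ∈ K ∧ (ξ, ((0 : Fin 2), k)) ∈ ρ} :=
    Set.ext fun k => and_congr_right fun hk => hKmem k hk
  have hself : ((π ξ, π ξ) ∈ ρ ↔ (ξ, ξ) ∈ ρ) := hρ π hπ hfixK ξ ξ
  by_cases hc1 : ∃ m, (ξ, ((1 : Fin 2), m)) ∈ ρ
  · have hc1' : ∃ m, (π ξ, ((1 : Fin 2), m)) ∈ ρ := by
      obtain ⟨m, hm⟩ := hc1; exact ⟨m, (hA m).2 hm⟩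
    rw [choice3, choice3, if_pos hc1', if_pos hc1, e1, hπ]
  · have hc1' : ¬∃ m, (π ξ, ((1 : Fin 2), m)) ∈ ρ := by
      intro ⟨m, hm⟩; exact hc1 ⟨m, (hA m).1 hm⟩
    by_cases hc2 : (ξ, ξ) ∈ ρ
    · rw [choice3, choice3, if_neg hc1', if_neg hc1, if_pos (hself.2 hc2), if_pos hc2]
    · have hc2' : ¬(π ξ, π ξ) ∈ ρ := fun h => hc2 (hself.1 h)
      by_cases hc3 : ∃ k, k ∈ K ∧ (ξ, ((0 : Fin 2), k)) ∈ ρ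
      · have hc3' : ∃ k, k ∈ K ∧ (π ξ, ((0 : Fin 2), k)) ∈ ρ := by
          obtain ⟨k, hk, hkm⟩ := hc3; exact ⟨k, hk, (hKmem k hk).2 hkm⟩
        rw [choice3, choice3, if_neg hc1', if_neg hc1, if_neg hc2', if_neg hc2,
          if_pos hc3', if_pos hc3, e2]
        have hmem : sInf {k | k ∈ K ∧ (ξ, ((0 : Fin 2), k)) ∈ ρ} ∈
            {k | k ∈ K ∧ (ξ, ((0 : Fin 2), k)) ∈ ρ} := Nat.sInf_mem (by
          obtain ⟨k, hk⟩ := hc3; exact ⟨k, hk⟩)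
        rw [hfixK _ hmem.1]
      · have hc3' : ¬∃ k, k ∈ K ∧ (π ξ, ((0 : Fin 2), k)) ∈ ρ := by
          intro ⟨k, hk, hkm⟩; exact hc3 ⟨k, hk, (hKmem k hk).1 hkm⟩
        have hiff : π ξ = ((0 : Fin 2), k₀) ↔ ξ = ((0 : Fin 2), k₀) := by
          constructor
          · intro h
            apply π.injective
            rw [h, h0]
          · intro h; rw [h, h0]
        by_cases hc4 : ξ = ((0 : Fin 2), k₀)
        · rw [choice3, choice3, if_neg hc1', if_neg hc1, if_neg hc2', if_neg hc2,
            if_neg hc3', if_neg hc3, if_pos (hiff.2 hc4), if_pos hc4, h1]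
        · rw [choice3, choice3, if_neg hc1', if_neg hc1, if_neg hc2', if_neg hc2,
            if_neg hc3', if_neg hc3, if_neg (fun h => hc4 (hiff.1 h)), if_neg hc4, h0]

lemma choice3_mem (K : Set ℕ) (ρ : Set ((Fin 2 × ℕ) × (Fin 2 × ℕ))) (k₀ k₁ : ℕ)
    (hρ : SymmRel3 K ρ) (hk₀ : k₀ ∉ K) (hk₁ : k₁ ∉ K) (hne : k₀ ≠ k₁)
    (ξ : Fin 2 × ℕ) (h : ∃ η, (ξ, η) ∈ ρ) : (ξ, choice3 K ρ k₀ k₁ ξ) ∈ ρ := by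
  classical
  by_cases hc1 : ∃ m, (ξ, ((1 : Fin 2), m)) ∈ ρ
  · rw [choice3, if_pos hc1]
    exact Nat.sInf_mem hc1
  by_cases hc2 : (ξ, ξ) ∈ ρ
  · rw [choice3, if_neg hc1, if_pos hc2]; exact hc2
  by_cases hc3 : ∃ k, k ∈ K ∧ (ξ, ((0 : Fin 2), k)) ∈ ρ
  · rw [choice3, if_neg hc1, if_neg hc2, if_pos hc3]
    exact (Nat.sInf_mem hc3).2
  -- generic case
  obtain ⟨⟨f, m⟩, hm⟩ := h
  fin_cases f
  · -- η = (0, m)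
    have hmK : m ∉ K := fun h => hc3 ⟨m, h, hm⟩
    have hmξ : ((0 : Fin 2), m) ≠ ξ := fun h => hc2 (h ▸ hm)
    have key : ∀ t, t ∉ K → ((0 : Fin 2), t) ≠ ξ → (ξ, ((0 : Fin 2), t)) ∈ ρ := by
      intro t htK htξ
      by_cases hmt : m = t
      · exact hmt ▸ hm
      · set π : Equiv.Perm (Fin 2 × ℕ) := Equiv.swap ((0 : Fin 2), m) ((0 : Fin 2), t) with hπdef
        have h10 : ∀ (n b : ℕ), ((1 : Fin 2), n) ≠ ((0 : Fin 2), b) := by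
          intro n b h
          exact one_ne_zero (congrArg Prod.fst h)
        have hπG : InG3 π := fun n =>
          Equiv.swap_apply_of_ne_of_ne (h10 n m) (h10 n t)
        have hπK : ∀ k ∈ K, π ((0 : Fin 2), k) = ((0 : Fin 2), k) := by
          intro k hk
          exact Equiv.swap_apply_of_ne_of_ne
            (fun h => by injection h with _ h2; exact hmK (h2 ▸ hk))
            (fun h => by injection h with _ h2; exact htK (h2 ▸ hk))
        have hπξ : π ξ = ξ :=
          Equiv.swap_apply_of_ne_of_ne (fun h => hmξ h.symm) (fun h => htξ h.symm)
        have hπm : π ((0 : Fin 2), m) = ((0 : Fin 2), t) := Equiv.swap_apply_left _ _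
        have := hρ π hπG hπK ξ ((0 : Fin 2), m)
        rw [hπξ, hπm] at this
        exact this.2 hm
    rw [choice3, if_neg hc1, if_neg hc2, if_neg hc3]
    by_cases hc4 : ξ = ((0 : Fin 2), k₀)
    · rw [if_pos hc4]
      refine key k₁ hk₁ ?_
      rw [hc4]
      exact fun h => hne ((congrArg Prod.snd h).symm)
    · rw [if_neg hc4]
      exact key k₀ hk₀ (fun h => hc4 h.symm)
  · exact absurd hm (fun h => hc1 ⟨m, h⟩)

theorem stmt_10 (K : Set ℕ) (hK : K.Finite) (ρ : Set ((Fin 2 × ℕ) × (Fin 2 × ℕ)))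
    (hρ : SymmRel3 K ρ) :
    ∃ (K' : Set ℕ) (σ : Set ((Fin 2 × ℕ) × (Fin 2 × ℕ))), K'.Finite ∧ SymmRel3 K' σ ∧
      ∀ ξ : Fin 2 × ℕ, (∃ η : Fin 2 × ℕ, (ξ, η) ∈ ρ) →
        ∃! η : Fin 2 × ℕ, (ξ, η) ∈ ρ ∧ (ξ, η) ∈ σ := by
  classical
  obtain ⟨k₀, hk₀⟩ := (hK.infinite_compl).nonempty
  obtain ⟨k₁, hk₁⟩ := ((hK.union (Set.finite_singleton k₀)).infinite_compl).nonempty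
  have hk₁K : k₁ ∉ K := fun h => hk₁ (Or.inl h)
  have hne : k₀ ≠ k₁ := fun h => hk₁ (Or.inr (by simp [h]))
  refine ⟨K ∪ {k₀, k₁}, {p | p.2 = choice3 K ρ k₀ k₁ p.1}, hK.union (by simp), ?_, ?_⟩
  · intro π hπ hfix ξ η
    have hfixK : ∀ k ∈ K, π (0, k) = (0, k) := fun k hk => hfix k (Or.inl hk)
    have h0 : π (0, k₀) = (0, k₀) := hfix k₀ (Or.inr (Or.inl rfl))
    have h1 : π (0, k₁) = (0, k₁) := hfix k₁ (Or.inr (Or.inr rfl))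
    simp only [Set.mem_setOf_eq]
    rw [choice3_equivariant K ρ k₀ k₁ hρ π hπ hfixK h0 h1 ξ]
    exact π.injective.eq_iff
  · intro ξ h
    refine ⟨choice3 K ρ k₀ k₁ ξ,
      ⟨choice3_mem K ρ k₀ k₁ hρ hk₀ hk₁K hne ξ h, rfl⟩, ?_⟩
    rintro η ⟨-, hσ⟩
    exact hσ
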